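/- arXiv:0906.3655 — 2 statements merged into one kernel-verified Lean document; each statement's English description precedes it below -/
import Mathlib

section
/- For every n ≥ 3 and any three distinct vectors a, b, f ∈ V_n with Q_0(a) = Q_0(b), there exists a linear automorphism g of V_n preserving the symplectic form such that g fixes H_f setwise, g(H_a) = H_b, and g(H_b) = H_a. -/
/-- The symplectic vector space `V_n = (ZMod 2)^(2n)` of the n-qubit real Pauli group. -/
abbrev V (n : ℕ) : Type := Fin (2 * n) → ZMod 2

/-- The index `2i-1` (0-based: `2i`). -/
def i0 {n : ℕ} (i : Fin n) : Fin (2 * n) := ⟨2 * i.1, by have := i.isLt; omega⟩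

/-- The index `2i` (0-based: `2i+1`). -/
def i1 {n : ℕ} (i : Fin n) : Fin (2 * n) := ⟨2 * i.1 + 1, by have := i.isLt; omega⟩

/-- The symplectic form `⟨x,y⟩ = Σ_{i=1}^n (x_{2i−1} y_{2i} + x_{2i} y_{2i−1})`. -/
def sform {n : ℕ} (x y : V n) : ZMod 2 :=
  ∑ i : Fin n, (x (i0 i) * y (i1 i) + x (i1 i) * y (i0 i))

/-- The point set `P = V_n \ {0}` of the incidence geometry `G_n`. -/
def P (n : ℕ) : Set (V n) := {x | x ≠ 0}

/-- The line set `L = {{a,b,a+b} : a,b ∈ P, a ≠ b, ⟨a,b⟩ = 0}` of `G_n`. -/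
def Lines (n : ℕ) : Set (Set (V n)) :=
  {l | ∃ a b : V n, a ∈ P n ∧ b ∈ P n ∧ a ≠ b ∧ sform a b = 0 ∧ l = {a, b, a + b}}

/-- A subset `H ⊆ P` satisfies condition (H1) if every line meets it in exactly
one point or is contained in it. -/
def IsH1 {n : ℕ} (H : Set (V n)) : Prop :=
  H ⊆ P n ∧ ∀ l ∈ Lines n, (H ∩ l).ncard = 1 ∨ l ⊆ H

/-- A geometric hyperplane: a subset satisfying (H1) which is not the full point set. -/
def IsHyperplane {n : ℕ} (H : Set (V n)) : Prop := IsH1 H ∧ H ≠ P n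

/-- `A ⊞ B`: the complement in `P` of the symmetric difference of `A` and `B`. -/
def boxAdd {n : ℕ} (A B : Set (V n)) : Set (V n) := P n \ (symmDiff A B)

/-- The quadratic form `Q_0(x) = Σ_{i=1}^n x_{2i−1} x_{2i}`. -/
def Q0 {n : ℕ} (x : V n) : ZMod 2 := ∑ i : Fin n, x (i0 i) * x (i1 i)

/-- The quadratic form `Q_p(x) = Q_0(x) + ⟨p,x⟩`. -/
def Qf {n : ℕ} (p x : V n) : ZMod 2 := Q0 x + sform p x

/-- The perp-set hyperplane `C_p = {x ∈ P : ⟨p,x⟩ = 0}`. -/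
def Cset {n : ℕ} (p : V n) : Set (V n) := {x ∈ P n | sform p x = 0}

/-- The quadric hyperplane `H_p = {x ∈ P : Q_p(x) = 0}`. -/
def Hset {n : ℕ} (p : V n) : Set (V n) := {x ∈ P n | Qf p x = 0}

/-- The symplectic transvection `t_p : x ↦ x + ⟨p,x⟩·p`. -/
def tv {n : ℕ} (p : V n) (x : V n) : V n := x + sform p x • p



/-!
Transvections `t_p x = x + ⟨p, x⟩ p` are symplectic, and `Q_c ∘ t_p = Q_{c + (Q_c(p) + 1) p}`,
so `t_p` fixes `H_c` when `Q_c(p) = 1` and maps it onto `H_{c + p}` when `Q_c(p) = 0`.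
As `Q_0(a) = Q_0(b)` forces `Q_a(a + b) = Q_b(a + b) = 0`, the transvection `t_{a+b}` swaps `H_a`
and `H_b`, and it fixes `H_f` if `Q_f(a + b) = 1`. Otherwise pick `w` with `⟨a + b, w⟩ = 0`,
`⟨a + f, w⟩ = 1` and `Q_a(w) = 0`: then `t_w` fixes `H_f` and sends `H_a, H_b` to
`H_{a+w}, H_{b+w}`, which `t_{a+b+w}` sends to `H_b, H_a` while fixing `H_f`.
Such a `w` exists for `n ≥ 3`: the orthogonal of `{a + b, a + f}` has dimension `≥ 2n - 2 > n`, so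
it is not totally isotropic and contains `u, u'` with `⟨u, u'⟩ = 1`. If `w₀` satisfies the two
linear conditions, the four values of `Q_a` on `w₀ + span {u, u'}` sum to `⟨u, u'⟩ = 1`, so one of
them vanishes.
-/

lemma ZMod.two_eq_zero_or_eq_one (c : ZMod 2) : c = 0 ∨ c = 1 := by
  revert c; decide

lemma ZModModule.add_add_cancel_left {G : Type*} [AddCommGroup G] [Module (ZMod 2) G] (x y : G) :
    x + (x + y) = y := by
  rw [← add_assoc, ZModModule.add_self, zero_add]

lemma ZModModule.mem_span_singleton {G : Type*} [AddCommGroup G] [Module (ZMod 2) G] {x y : G} :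
    x ∈ ZMod 2 ∙ y ↔ x = 0 ∨ x = y := by
  rw [Submodule.mem_span_singleton]
  constructor
  · rintro ⟨c, rfl⟩
    rcases ZMod.two_eq_zero_or_eq_one c with rfl | rfl <;> simp
  · rintro (rfl | rfl)
    exacts [⟨0, zero_smul _ _⟩, ⟨1, one_smul _ _⟩]

open Module

namespace LinearMap.BilinForm

variable {K V : Type*} [Field K] [AddCommGroup V] [Module K V] [FiniteDimensional K V]
  {B : LinearMap.BilinForm K V}

lemma exists_apply_ne_zero_of_finrank_lt (hB : B.Nondegenerate) {W : Submodule K V}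
    (hW : finrank K V < 2 * finrank K W) : ∃ u ∈ W, ∃ u' ∈ W, B u u' ≠ 0 := by
  by_contra! h
  have hle : finrank K W ≤ finrank K (B.orthogonal W) :=
    Submodule.finrank_mono fun u' hu' u hu => h u hu u' hu'
  rw [finrank_orthogonal hB] at hle
  omega

lemma exists_orthogonal_pair_apply_ne_zero {ι : Type*} [Fintype ι] (hB : B.Nondegenerate)
    (v : ι → V) (hV : 2 * Fintype.card ι < finrank K V) :
    ∃ u u', (∀ i, B (v i) u = 0) ∧ (∀ i, B (v i) u' = 0) ∧ B u u' ≠ 0 := by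
  have hW : finrank K V < 2 * finrank K (B.orthogonal (Submodule.span K (Set.range v))) := by
    have := finrank_range_le_card (R := K) v
    rw [Set.finrank] at this
    rw [finrank_orthogonal hB]
    omega
  obtain ⟨u, hu, u', hu', huu'⟩ := exists_apply_ne_zero_of_finrank_lt hB hW
  have hv i : v i ∈ Submodule.span K (Set.range v) := Submodule.subset_span ⟨i, rfl⟩
  exact ⟨u, u', fun i => hu _ (hv i), fun i => hu' _ (hv i), huu'⟩

lemma exists_apply_eq_zero_apply_eq_one (hB : B.Nondegenerate) (hB₀ : B.IsRefl) {v₁ v₂ : V}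
    (h : v₂ ∉ K ∙ v₁) : ∃ w, B v₁ w = 0 ∧ B v₂ w = 1 := by
  obtain ⟨w, hw₁, hw₂⟩ : ∃ w ∈ B.orthogonal (K ∙ v₁), B v₂ w ≠ 0 := by
    by_contra! h'
    rw [← orthogonal_orthogonal hB hB₀ (K ∙ v₁)] at h
    exact h fun w hw => hB₀ _ _ (h' w hw)
  refine ⟨(B v₂ w)⁻¹ • w, ?_, ?_⟩
  · simp [hw₁ v₁ (Submodule.mem_span_singleton_self v₁)]
  · simp [hw₂]

end LinearMap.BilinForm

section Symplectic

variable {n : ℕ}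

lemma i0_injective : Function.Injective (i0 : Fin n → Fin (2 * n)) := by
  intro i j h; simp only [i0, Fin.ext_iff] at h; omega

lemma i1_injective : Function.Injective (i1 : Fin n → Fin (2 * n)) := by
  intro i j h; simp only [i1, Fin.ext_iff] at h; omega

lemma i0_ne_i1 (i j : Fin n) : i0 i ≠ i1 j := by
  simp only [i0, i1, ne_eq, Fin.ext_iff]; omega

lemma exists_eq_i0_or_eq_i1 (k : Fin (2 * n)) : ∃ i : Fin n, k = i0 i ∨ k = i1 i :=
  ⟨⟨k / 2, by omega⟩, by simp only [i0, i1, Fin.ext_iff]; omega⟩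

lemma sform_comm (x y : V n) : sform x y = sform y x := by
  unfold sform; congr! 1; ring

lemma sform_self (x : V n) : sform x x = 0 := by
  simp only [sform, mul_comm (x (i1 _)), ZModModule.add_self, Finset.sum_const_zero]

lemma sform_add_left (x y z : V n) : sform (x + y) z = sform x z + sform y z := by
  simp only [sform, ← Finset.sum_add_distrib, Pi.add_apply]; congr! 1; ring

lemma sform_smul_left (c : ZMod 2) (x y : V n) : sform (c • x) y = c * sform x y := by
  simp only [sform, Finset.mul_sum, Pi.smul_apply, smul_eq_mul]; congr! 1; ring

lemma sform_add_right (x y z : V n) : sform x (y + z) = sform x y + sform x z := by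
  rw [sform_comm, sform_add_left, sform_comm y, sform_comm z]

lemma sform_smul_right (c : ZMod 2) (x y : V n) : sform x (c • y) = c * sform x y := by
  rw [sform_comm, sform_smul_left, sform_comm]

lemma sform_single_i0 (x : V n) (i : Fin n) : sform x (Pi.single (i0 i) 1) = x (i1 i) := by
  simp [sform, Pi.single_apply, i0_injective.eq_iff, (i0_ne_i1 _ _).symm]

lemma sform_single_i1 (x : V n) (i : Fin n) : sform x (Pi.single (i1 i) 1) = x (i0 i) := by
  simp [sform, Pi.single_apply, i1_injective.eq_iff, i0_ne_i1]

def sformB : LinearMap.BilinForm (ZMod 2) (V n) :=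
  LinearMap.mk₂ (ZMod 2) sform sform_add_left sform_smul_left sform_add_right sform_smul_right

lemma sformB_apply (x y : V n) : sformB x y = sform x y := rfl

lemma sformB_isRefl : (sformB : LinearMap.BilinForm (ZMod 2) (V n)).IsRefl := fun x y h => by
  rwa [sformB_apply, sform_comm] at h

lemma sformB_nondegenerate : (sformB : LinearMap.BilinForm (ZMod 2) (V n)).Nondegenerate := by
  refine sformB_isRefl.nondegenerate_iff_separatingLeft.mpr fun x hx => funext fun k => ?_
  obtain ⟨i, rfl | rfl⟩ := exists_eq_i0_or_eq_i1 k
  · exact (sform_single_i1 x i).symm.trans (hx _)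
  · exact (sform_single_i0 x i).symm.trans (hx _)

end Symplectic

section Transvection

variable {n : ℕ}

lemma Q0_add (x y : V n) : Q0 (x + y) = Q0 x + Q0 y + sform x y := by
  simp only [Q0, sform, ← Finset.sum_add_distrib, Pi.add_apply]; congr! 1; ring

lemma Q0_smul (c : ZMod 2) (x : V n) : Q0 (c • x) = c * Q0 x := by
  rcases ZMod.two_eq_zero_or_eq_one c with rfl | rfl <;> simp [Q0]

lemma Qf_self (a : V n) : Qf a a = Q0 a := by
  rw [Qf, sform_self, add_zero]

lemma Qf_add_right (c x y : V n) : Qf c (x + y) = Qf c x + Qf c y + sform x y := by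
  rw [Qf, Qf, Qf, Q0_add, sform_add_right]; ring

lemma Qf_add_left (c d x : V n) : Qf (c + d) x = Qf c x + sform d x := by
  rw [Qf, Qf, sform_add_left, add_assoc]

lemma Qf_add_of_Q0_eq {a b : V n} (h : Q0 a = Q0 b) : Qf a (a + b) = 0 := by
  rw [Qf_add_right, Qf_self, Qf, h, ← add_assoc, ZModModule.add_self, zero_add,
    ZModModule.add_self]

lemma tv_involutive (p : V n) : Function.Involutive (tv p) := fun x => by
  rw [tv, tv, sform_add_right, sform_smul_right, sform_self, mul_zero, add_zero, add_assoc,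
    ZModModule.add_self, add_zero]

def tvE (p : V n) : V n ≃ₗ[ZMod 2] V n :=
  LinearEquiv.ofInvolutive
    { toFun := tv p
      map_add' x y := by simp only [tv, sform_add_right, add_smul]; abel
      map_smul' c x := by simp only [tv, sform_smul_right, mul_smul, smul_add, RingHom.id_apply] }
    (tv_involutive p)

lemma sform_tv (p x y : V n) : sform (tv p x) (tv p y) = sform x y := by
  simp only [tv, sform_add_left, sform_add_right, sform_smul_left, sform_smul_right, sform_self,
    mul_zero, add_zero, sform_comm x p]
  rw [mul_comm (sform p y), add_assoc, ZModModule.add_self, add_zero]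

lemma tv_ne_zero (p : V n) {x : V n} (hx : x ≠ 0) : tv p x ≠ 0 :=
  (tvE p).map_ne_zero_iff.mpr hx

lemma Qf_tv (c p x : V n) : Qf (c + (Qf c p + 1) • p) (tv p x) = Qf c x := by
  simp only [tv, Qf, Q0_add, Q0_smul, sform_add_left, sform_add_right, sform_smul_left,
    sform_smul_right, sform_self, mul_zero, add_zero, sform_comm x p]
  generalize Q0 x = A; generalize Q0 p = B; generalize sform p x = s
  generalize sform c x = t; generalize sform c p = r
  revert A B s t r; decide

lemma tv_image_Hset (p c : V n) : tv p '' Hset c = Hset (c + (Qf c p + 1) • p) := by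
  ext y
  refine ⟨?_, fun ⟨hy, hQ⟩ => ⟨tv p y, ⟨tv_ne_zero p hy, ?_⟩, tv_involutive p y⟩⟩
  · rintro ⟨x, ⟨hx, hQ⟩, rfl⟩
    exact ⟨tv_ne_zero p hx, by rwa [Qf_tv]⟩
  · rwa [← Qf_tv c p, tv_involutive]

lemma tv_image_Hset_of_Qf_eq_zero {p c : V n} (h : Qf c p = 0) :
    tv p '' Hset c = Hset (c + p) := by
  rw [tv_image_Hset, h, zero_add, one_smul]

lemma tv_image_Hset_of_Qf_eq_one {p c : V n} (h : Qf c p = 1) : tv p '' Hset c = Hset c := by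
  rw [tv_image_Hset, h, ZModModule.add_self, zero_smul, add_zero]

end Transvection

section Swap

variable {n : ℕ}

lemma exists_sform_eq_zero_sform_eq_one_Qf_eq_zero (hn : 3 ≤ n) (a : V n) {v₁ v₂ : V n}
    (h₂ : v₂ ≠ 0) (h₁₂ : v₁ ≠ v₂) : ∃ w, sform v₁ w = 0 ∧ sform v₂ w = 1 ∧ Qf a w = 0 := by
  obtain ⟨w₀, hw₀₁, hw₀₂⟩ :=
    LinearMap.BilinForm.exists_apply_eq_zero_apply_eq_one sformB_nondegenerate sformB_isRefl
      (v₁ := v₁) (v₂ := v₂) (by rw [ZModModule.mem_span_singleton]; tauto)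
  obtain ⟨u, u', hu, hu', huu'⟩ :=
    LinearMap.BilinForm.exists_orthogonal_pair_apply_ne_zero sformB_nondegenerate ![v₁, v₂]
      (by simp only [Fintype.card_fin, finrank_fin_fun]; omega)
  simp only [sformB_apply] at hw₀₁ hw₀₂ huu'
  simp only [sformB_apply, Fin.forall_fin_two, Matrix.cons_val_zero, Matrix.cons_val_one] at hu hu'
  have hsum : Qf a w₀ + Qf a (w₀ + u) + Qf a (w₀ + u') + Qf a (w₀ + (u + u')) = 1 := by
    simp only [Qf_add_right, sform_add_right]
    revert huu'
    generalize Qf a w₀ = A; generalize Qf a u = B; generalize Qf a u' = C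
    generalize sform w₀ u = D; generalize sform w₀ u' = E; generalize sform u u' = F
    revert A B C D E F; decide
  obtain ⟨z, hz₁, hz₂, hz⟩ : ∃ z, sform v₁ z = 0 ∧ sform v₂ z = 0 ∧ Qf a (w₀ + z) = 0 := by
    have h0 : ∀ v : V n, sform v 0 = 0 := fun v => (sformB v).map_zero
    have hplus : ∀ v, sform v u = 0 → sform v u' = 0 → sform v (u + u') = 0 := fun v h h' => by
      rw [sform_add_right, h, h', add_zero]
    have odd_sum : ∀ A B C D : ZMod 2, A + B + C + D = 1 → A = 0 ∨ B = 0 ∨ C = 0 ∨ D = 0 := by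
      decide
    rcases odd_sum _ _ _ _ hsum with h | h | h | h
    · exact ⟨0, h0 _, h0 _, by rwa [add_zero]⟩
    · exact ⟨u, hu.1, hu.2, h⟩
    · exact ⟨u', hu'.1, hu'.2, h⟩
    · exact ⟨u + u', hplus _ hu.1 hu'.1, hplus _ hu.2 hu'.2, h⟩
  exact ⟨w₀ + z, by rw [sform_add_right, hw₀₁, hz₁, add_zero],
    by rw [sform_add_right, hw₀₂, hz₂, add_zero], hz⟩

lemma tv_add_image_Hset {a b f : V n} (hQ : Q0 a = Q0 b) (hf : Qf f (a + b) = 1) :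
    tv (a + b) '' Hset f = Hset f ∧ tv (a + b) '' Hset a = Hset b ∧
      tv (a + b) '' Hset b = Hset a := by
  refine ⟨tv_image_Hset_of_Qf_eq_one hf, ?_, ?_⟩
  · rw [tv_image_Hset_of_Qf_eq_zero (Qf_add_of_Q0_eq hQ), ZModModule.add_add_cancel_left]
  · rw [add_comm, tv_image_Hset_of_Qf_eq_zero (Qf_add_of_Q0_eq hQ.symm),
      ZModModule.add_add_cancel_left]

lemma tv_comp_tv_image_Hset {a b f w : V n} (hQ : Q0 a = Q0 b) (hf : Qf f (a + b) = 0)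
    (hab : sform (a + b) w = 0) (haf : sform (a + f) w = 1) (ha : Qf a w = 0) :
    tv (a + b + w) ∘ tv w '' Hset f = Hset f ∧ tv (a + b + w) ∘ tv w '' Hset a = Hset b ∧
      tv (a + b + w) ∘ tv w '' Hset b = Hset a := by
  have hb : Qf b w = 0 := by
    rw [← ZModModule.add_add_cancel_left a b, Qf_add_left, ha, hab, add_zero]
  have hfw : Qf f w = 1 := by
    rw [← ZModModule.add_add_cancel_left a f, Qf_add_left, ha, haf, zero_add]
  have hwu : sform w (a + b + w) = 0 := by
    rw [sform_add_right, sform_self, add_zero, sform_comm, hab]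
  have hba : Qf b (a + b) = 0 := by rw [add_comm]; exact Qf_add_of_Q0_eq hQ.symm
  have hf' : Qf f (a + b + w) = 1 := by rw [Qf_add_right, hf, hfw, hab, zero_add, add_zero]
  have ha' : Qf (a + w) (a + b + w) = 0 := by
    rw [Qf_add_left, hwu, Qf_add_right, Qf_add_of_Q0_eq hQ, ha, hab, add_zero, add_zero, add_zero]
  have hb' : Qf (b + w) (a + b + w) = 0 := by
    rw [Qf_add_left, hwu, Qf_add_right, hba, hb, hab, add_zero, add_zero, add_zero]
  refine ⟨?_, ?_, ?_⟩ <;> rw [Set.image_comp]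
  · rw [tv_image_Hset_of_Qf_eq_one hfw, tv_image_Hset_of_Qf_eq_one hf']
  · rw [tv_image_Hset_of_Qf_eq_zero ha, tv_image_Hset_of_Qf_eq_zero ha']
    congr 1; abel_nf; simp only [two_zsmul, ZModModule.add_self, zero_add]
  · rw [tv_image_Hset_of_Qf_eq_zero hb, tv_image_Hset_of_Qf_eq_zero hb']
    congr 1; abel_nf; simp only [two_zsmul, ZModModule.add_self, zero_add]

end Swap

theorem stmt15_general (n : ℕ) (hn : 3 ≤ n) (a b f : V n)
    (haf : a ≠ f) (hbf : b ≠ f) (hQ : Q0 a = Q0 b) :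
    ∃ g : V n ≃ₗ[ZMod 2] V n,
      (∀ x y : V n, sform (g x) (g y) = sform x y) ∧
      ⇑g '' Hset f = Hset f ∧ ⇑g '' Hset a = Hset b ∧ ⇑g '' Hset b = Hset a := by
  rcases ZMod.two_eq_zero_or_eq_one (Qf f (a + b)) with hf | hf
  · obtain ⟨w, hwab, hwaf, hwa⟩ := exists_sform_eq_zero_sform_eq_one_Qf_eq_zero hn a
      (v₁ := a + b) (v₂ := a + f) (by rwa [Ne, add_eq_zero_iff_eq_neg, ZModModule.neg_eq_self])
      (fun h => hbf (add_left_cancel h))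
    exact ⟨(tvE w).trans (tvE (a + b + w)), fun x y => (sform_tv _ _ _).trans (sform_tv _ _ _),
      tv_comp_tv_image_Hset hQ hf hwab hwaf hwa⟩
  · exact ⟨tvE (a + b), sform_tv _, tv_add_image_Hset hQ hf⟩

theorem stmt15 (n : ℕ) (hn : 3 ≤ n) (a b f : V n)
    (hab : a ≠ b) (haf : a ≠ f) (hbf : b ≠ f) (hQ : Q0 a = Q0 b) :
    ∃ g : V n ≃ₗ[ZMod 2] V n,
      (∀ x y : V n, sform (g x) (g y) = sform x y) ∧
      ⇑g '' Hset f = Hset f ∧ ⇑g '' Hset a = Hset b ∧ ⇑g '' Hset b = Hset a :=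
  stmt15_general n hn a b f haf hbf hQ
end

section
/- For every n ≥ 3 and any two vectors a, b ∈ V_n, if Q_0(a) ≠ Q_0(b) then the intersection H_a ∩ H_b has exactly 4^{n−1} − 1 points, and if a ≠ b with Q_0(a) = Q_0(b) = 1 then H_a ∩ H_b has exactly 4^{n−1} − 2^{n−1} − 1 points. -/
/-!
Write `χ z = (-1)^z` on `ZMod 2`. For `a ≠ b` the indicator of `Q_a(x) = Q_b(x) = 0` is
`¼ (1 + χ(Q_a x)) (1 + χ(Q_b x))`, and `χ(Q_a x) χ(Q_b x) = χ⟨a + b, x⟩`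
since `Q_a + Q_b = ⟨a + b, ·⟩`.
In the coordinate pairs `(x_{2i-1}, x_{2i})` every such character sum factors into a product of
sums over `(ZMod 2)²`, which gives `∑ χ(Q_p) = 2^n χ(Q_0 p)` and `∑ χ⟨c, ·⟩ = 0` for `c ≠ 0`. Hence
`4 · #{Q_a = Q_b = 0} = 4^n + 2^n (χ(Q_0 a) + χ(Q_0 b))`, and `H_a ∩ H_b` is this set without `0`.
-/

open Finset

def pairCoords (n : ℕ) : V n ≃ (Fin n → ZMod 2 × ZMod 2) :=
  (((finProdFinEquiv.trans (finCongr (mul_comm n 2))).arrowCongr (Equiv.refl (ZMod 2))).symm.trans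
    (Equiv.curry _ _ _)).trans (Equiv.arrowCongr (Equiv.refl _) (finTwoArrowEquiv (ZMod 2)))

@[simp] lemma pairCoords_apply {n : ℕ} (x : V n) (i : Fin n) :
    pairCoords n x i = (x (i0 i), x (i1 i)) := by
  simp [pairCoords, i0, i1, finProdFinEquiv, Equiv.arrowCongr, add_comm]

def chi (z : ZMod 2) : ℤ := (-1) ^ z.val

lemma chi_add (a b : ZMod 2) : chi (a + b) = chi a * chi b := by
  revert a b; decide

lemma chi_sum {ι : Type*} (s : Finset ι) (g : ι → ZMod 2) :
    chi (∑ i ∈ s, g i) = ∏ i ∈ s, chi (g i) := by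
  induction s using Finset.cons_induction with
  | empty => rfl
  | cons a s ha ih => rw [sum_cons, prod_cons, chi_add, ih]

lemma sum_chi_sum_pairs {n : ℕ} (f : Fin n → ZMod 2 → ZMod 2 → ZMod 2) :
    ∑ x : V n, chi (∑ i, f i (x (i0 i)) (x (i1 i))) = ∏ i, ∑ u, ∑ v, chi (f i u v) := by
  calc ∑ x : V n, chi (∑ i, f i (x (i0 i)) (x (i1 i)))
      = ∑ y : Fin n → ZMod 2 × ZMod 2, ∏ i, chi (f i (y i).1 (y i).2) :=
        Fintype.sum_equiv (pairCoords n) _ _ fun x => by simp [chi_sum]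
    _ = ∏ i, ∑ w : ZMod 2 × ZMod 2, chi (f i w.1 w.2) :=
        (Fintype.prod_sum fun i (w : ZMod 2 × ZMod 2) => chi (f i w.1 w.2)).symm
    _ = ∏ i, ∑ u, ∑ v, chi (f i u v) := by simp only [Fintype.sum_prod_type]

lemma Qf_eq_sum {n : ℕ} (p x : V n) :
    Qf p x = ∑ i, (x (i0 i) * x (i1 i) + p (i0 i) * x (i1 i) + p (i1 i) * x (i0 i)) := by
  simp only [Qf, Q0, sform, ← sum_add_distrib, add_assoc]

lemma Qf_add_Qf {n : ℕ} (a b x : V n) : Qf a x + Qf b x = sform (a + b) x := by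
  simp only [Qf_eq_sum, sform, ← sum_add_distrib, Pi.add_apply]
  refine sum_congr rfl fun i _ => ?_
  grind

lemma sum_chi_Qf {n : ℕ} (p : V n) : ∑ x, chi (Qf p x) = 2 ^ n * chi (Q0 p) := by
  have local_sum : ∀ s t : ZMod 2, ∑ u, ∑ v, chi (u * v + s * v + t * u) = 2 * chi (s * t) := by
    decide
  simp only [Qf_eq_sum]
  rw [sum_chi_sum_pairs fun i u v => u * v + p (i0 i) * v + p (i1 i) * u]
  simp only [local_sum, prod_mul_distrib, Q0, chi_sum, prod_const, card_univ, Fintype.card_fin]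

lemma sum_chi_sform_of_ne_zero {n : ℕ} {c : V n} (hc : c ≠ 0) : ∑ x, chi (sform c x) = 0 := by
  have local_sum : ∀ s t : ZMod 2, s ≠ 0 ∨ t ≠ 0 → ∑ u, ∑ v, chi (s * v + t * u) = 0 := by
    decide
  obtain ⟨i, hi⟩ : ∃ i, c (i0 i) ≠ 0 ∨ c (i1 i) ≠ 0 := by
    by_contra! h
    exact hc ((pairCoords n).injective (funext fun i => by simp [h i]))
  simp only [sform, sum_chi_sum_pairs fun i u v => c (i0 i) * v + c (i1 i) * u]
  exact prod_eq_zero (mem_univ i) (local_sum _ _ hi)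

lemma four_mul_card_common_zeros {n : ℕ} {a b : V n} (hab : a ≠ b) :
    4 * (#{x | Qf a x = 0 ∧ Qf b x = 0} : ℤ) = 4 ^ n + 2 ^ n * (chi (Q0 a) + chi (Q0 b)) := by
  have indicator : ∀ s t : ZMod 2,
      4 * ((if s = 0 ∧ t = 0 then 1 else 0 : ℕ) : ℤ) = 1 + chi s + chi t + chi (s + t) := by
    decide
  have hab' : a + b ≠ 0 := by rwa [← ZModModule.sub_eq_add, sub_ne_zero]
  rw [card_filter, Nat.cast_sum, mul_sum]
  simp only [indicator, sum_add_distrib, Qf_add_Qf, sum_chi_Qf, sum_chi_sform_of_ne_zero hab']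
  simp only [sum_const, card_univ, Fintype.card_pi, ZMod.card, prod_const, Fintype.card_fin,
    pow_mul, Nat.reducePow, Int.nsmul_eq_mul, Nat.cast_pow, Nat.cast_ofNat, mul_one, add_zero]
  ring

lemma ncard_Hset_inter_add_one {n : ℕ} (a b : V n) :
    (Hset a ∩ Hset b).ncard + 1 = #{x | Qf a x = 0 ∧ Qf b x = 0} := by
  have h0 : ∀ p : V n, Qf p 0 = 0 := by simp [Qf, Q0, sform]
  have hset : Hset a ∩ Hset b = ↑((univ.filter fun x => Qf a x = 0 ∧ Qf b x = 0).erase 0) := by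
    ext x
    simp only [Hset, P, Set.mem_inter_iff, Set.mem_ofPred_eq, coe_erase, Set.mem_sdiff, mem_coe,
      mem_filter, mem_univ, true_and, Set.mem_singleton_iff]
    tauto
  rw [hset, Set.ncard_coe_finset, card_erase_add_one]
  simp [h0]

lemma card_common_zeros_of_Q0_ne {m : ℕ} {a b : V (m + 1)} (hQ : Q0 a ≠ Q0 b) :
    #{x | Qf a x = 0 ∧ Qf b x = 0} = 4 ^ m := by
  have hchi : chi (Q0 a) + chi (Q0 b) = 0 := by
    generalize Q0 a = s, Q0 b = t at hQ
    revert s t; decide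
  have h := four_mul_card_common_zeros (ne_of_apply_ne Q0 hQ)
  rw [hchi, mul_zero, add_zero, pow_succ'] at h
  exact_mod_cast mul_left_cancel₀ four_ne_zero h

lemma card_common_zeros_of_Q0_eq_one {m : ℕ} {a b : V (m + 1)} (hab : a ≠ b) (ha : Q0 a = 1)
    (hb : Q0 b = 1) : #{x | Qf a x = 0 ∧ Qf b x = 0} = 4 ^ m - 2 ^ m := by
  have h := four_mul_card_common_zeros hab
  rw [ha, hb, show chi 1 = -1 from rfl] at h
  zify [Nat.pow_le_pow_left (show 2 ≤ 4 by norm_num) m]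
  linarith [pow_succ' (4 : ℤ) m, pow_succ' (2 : ℤ) m]

theorem stmt19_general (n : ℕ) :
    (∀ a b : V n, Q0 a ≠ Q0 b → (Hset a ∩ Hset b).ncard = 4 ^ (n - 1) - 1) ∧
    (∀ a b : V n, a ≠ b → Q0 a = 1 → Q0 b = 1 →
      (Hset a ∩ Hset b).ncard = 4 ^ (n - 1) - 2 ^ (n - 1) - 1) := by
  obtain _ | m := n
  · simp [Q0]
  simp only [Nat.add_sub_cancel]
  refine ⟨fun a b hQ => ?_, fun a b hab ha hb => ?_⟩
  · have := ncard_Hset_inter_add_one a b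
    rw [card_common_zeros_of_Q0_ne hQ] at this
    omega
  · have := ncard_Hset_inter_add_one a b
    rw [card_common_zeros_of_Q0_eq_one hab ha hb] at this
    omega

theorem stmt19 (n : ℕ) (hn : 3 ≤ n) :
    (∀ a b : V n, Q0 a ≠ Q0 b → (Hset a ∩ Hset b).ncard = 4 ^ (n - 1) - 1) ∧
    (∀ a b : V n, a ≠ b → Q0 a = 1 → Q0 b = 1 →
      (Hset a ∩ Hset b).ncard = 4 ^ (n - 1) - 2 ^ (n - 1) - 1) :=
  stmt19_general n
end
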